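/- In the two-agent, two-state log-utility belief reporting game with the symmetric linear opinion pool and beliefs p_a < p_b ≤ 1/2, the profile (ρ_a, ρ_b) = (0, 2p_b) is a pure Nash equilibrium. -/

import Mathlib

/-!
The expected log score `s(x) = p log x + (1 - p) log (1 - x)` of a belief `p ∈ [0, 1]` is concave
with slope `(p - q) / (q (1 - q))` at `q`, so its tangent line at `q` shows that moving the pool
`x` away from `q`, on the side away from `p`, never pays. For agent `a` the pool
`r / 2 + p_b ≥ p_b > p_a` is thus best at `r = 0`; agent `b` can bring the pool `r / 2` exactly
to its own belief `p_b ≤ 1/2` with `r = 2 p_b`.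
-/

/-- Two-state log payoff with convention `0 · ln 0 = 0`. -/
noncomputable def pay2 (p x : ℝ) : EReal :=
  (if x = 0 ∧ p ≠ 0 then (⊥ : EReal) else ((p * Real.log x : ℝ) : EReal)) +
  (if x = 1 ∧ p ≠ 1 then (⊥ : EReal) else (((1 - p) * Real.log (1 - x) : ℝ) : EReal))

open Real

noncomputable def expectedLogScore (p x : ℝ) : ℝ :=
  p * log x + (1 - p) * log (1 - x)

lemma pay2_eq_expectedLogScore {p x : ℝ} (h0 : x ≠ 0) (h1 : x ≠ 1) :
    pay2 p x = expectedLogScore p x := by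
  simp [pay2, expectedLogScore, h0, h1, EReal.coe_add]

lemma pay2_zero_of_ne_zero {p : ℝ} (hp : p ≠ 0) : pay2 p 0 = ⊥ := by
  simp [pay2, hp]

lemma pay2_one_of_ne_one {p : ℝ} (hp : p ≠ 1) : pay2 p 1 = ⊥ := by
  simp [pay2, hp]

lemma log_sub_log_le_div_sub_one {x y : ℝ} (hx : 0 < x) (hy : 0 < y) :
    log x - log y ≤ x / y - 1 := by
  rw [← log_div hx.ne' hy.ne']
  exact log_le_sub_one_of_pos (div_pos hx hy)

lemma expectedLogScore_le_tangent {p q x : ℝ} (hp0 : 0 ≤ p) (hp1 : p ≤ 1)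
    (hq0 : 0 < q) (hq1 : q < 1) (hx0 : 0 < x) (hx1 : x < 1) :
    expectedLogScore p x ≤ expectedLogScore p q + (x - q) * (p - q) / (q * (1 - q)) := by
  have hlog := mul_le_mul_of_nonneg_left (log_sub_log_le_div_sub_one hx0 hq0) hp0
  have hlog₁ := mul_le_mul_of_nonneg_left
    (log_sub_log_le_div_sub_one (sub_pos.2 hx1) (sub_pos.2 hq1)) (sub_nonneg.2 hp1)
  have hslope : p * (x / q - 1) + (1 - p) * ((1 - x) / (1 - q) - 1)
      = (x - q) * (p - q) / (q * (1 - q)) := by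
    field_simp [hq0.ne', (sub_pos.2 hq1).ne']
    ring
  unfold expectedLogScore
  linarith

lemma expectedLogScore_le_of_mul_nonpos {p q x : ℝ} (hp0 : 0 ≤ p) (hp1 : p ≤ 1)
    (hq0 : 0 < q) (hq1 : q < 1) (hx0 : 0 < x) (hx1 : x < 1) (h : (x - q) * (p - q) ≤ 0) :
    expectedLogScore p x ≤ expectedLogScore p q := by
  have hslope : (x - q) * (p - q) / (q * (1 - q)) ≤ 0 :=
    div_nonpos_of_nonpos_of_nonneg h (mul_pos hq0 (sub_pos.2 hq1)).le
  linarith [expectedLogScore_le_tangent hp0 hp1 hq0 hq1 hx0 hx1]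

lemma pay2_le_of_mul_nonpos {p q x : ℝ} (hp0 : 0 ≤ p) (hp1 : p ≤ 1)
    (hq0 : 0 < q) (hq1 : q < 1) (hx0 : 0 ≤ x) (hx1 : x ≤ 1) (h : (x - q) * (p - q) ≤ 0) :
    pay2 p x ≤ pay2 p q := by
  rcases hx0.eq_or_lt with rfl | hx0
  · have : q ≤ p := by nlinarith
    rw [pay2_zero_of_ne_zero (by linarith)]
    exact bot_le
  rcases hx1.lt_or_eq with hx1 | rfl
  · rw [pay2_eq_expectedLogScore hx0.ne' hx1.ne, pay2_eq_expectedLogScore hq0.ne' hq1.ne,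
      EReal.coe_le_coe_iff]
    exact expectedLogScore_le_of_mul_nonpos hp0 hp1 hq0 hq1 hx0 hx1 h
  · have : p ≤ q := by nlinarith
    rw [pay2_one_of_ne_one (by linarith)]
    exact bot_le

/-- with beliefs `0 ≤ pa < pb ≤ 1/2`, the profile `(0, 2 pb)` is a
pure Nash equilibrium of the two-agent, two-state log-utility reporting game. -/
theorem stmt3 (pa pb : ℝ) (hpa : 0 ≤ pa) (hab : pa < pb) (hpb : pb ≤ 1 / 2) :
    IsMaxOn (fun r => pay2 pa ((r + 2 * pb) / 2)) (Set.Icc (0:ℝ) 1) 0 ∧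
    IsMaxOn (fun r => pay2 pb ((0 + r) / 2)) (Set.Icc (0:ℝ) 1) (2 * pb) := by
  have hpb0 : 0 < pb := hpa.trans_lt hab
  have hpb1 : pb < 1 := by linarith
  constructor
  · rintro r ⟨hr0, hr1⟩
    show pay2 pa ((r + 2 * pb) / 2) ≤ pay2 pa ((0 + 2 * pb) / 2)
    rw [show (0 + 2 * pb) / 2 = pb by ring]
    exact pay2_le_of_mul_nonpos hpa (by linarith) hpb0 hpb1 (by linarith) (by linarith)
      (mul_nonpos_of_nonneg_of_nonpos (by linarith) (by linarith))
  · rintro r ⟨hr0, hr1⟩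
    show pay2 pb ((0 + r) / 2) ≤ pay2 pb ((0 + 2 * pb) / 2)
    rw [show (0 + 2 * pb) / 2 = pb by ring]
    exact pay2_le_of_mul_nonpos hpb0.le hpb1.le hpb0 hpb1 (by linarith) (by linarith)
      (by rw [sub_self, mul_zero])
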